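/- The two-qubit state η = (1/4)(I₄ + σ_y ⊗ σ_y), where σ_y is the Pauli-y matrix, is a separable density matrix (a convex combination of tensor product states) and satisfies ‖η − η^{T_B}‖₁ > 0, i.e. η is not invariant under partial transpose. -/

import Mathlib

open Matrix
open scoped ComplexOrder

/-- Singular values of a complex square matrix: square roots of eigenvalues of `Aᴴ * A`. -/
noncomputable def singularValues {n : Type*} [Fintype n] [DecidableEq n]
    (A : Matrix n n ℂ) : n → ℝ :=
  fun i => Real.sqrt ((Matrix.isHermitian_conjTranspose_mul_self A).eigenvalues i)

/-- Trace norm: sum of singular values. -/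
noncomputable def traceNorm {n : Type*} [Fintype n] [DecidableEq n]
    (A : Matrix n n ℂ) : ℝ := ∑ i, singularValues A i

/-- Positive-semidefinite square root (zero for non-PSD input). -/
noncomputable def msqrt {n : Type*} [Fintype n] [DecidableEq n]
    (A : Matrix n n ℂ) : Matrix n n ℂ :=
  open scoped Classical in
  if h : A.PosSemidef then
    h.1.eigenvectorUnitary.1 * diagonal ((↑) ∘ (√·) ∘ h.1.eigenvalues) *
      (star h.1.eigenvectorUnitary : Matrix n n ℂ) else 0

/-- Root fidelity √F(ρ,σ) = Tr √(√ρ σ √ρ). -/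
noncomputable def rootFid {n : Type*} [Fintype n] [DecidableEq n]
    (ρ σ : Matrix n n ℂ) : ℝ := ((msqrt (msqrt ρ * σ * msqrt ρ)).trace).re

/-- A density matrix: positive semidefinite with unit trace. -/
def IsDensity {n : Type*} [Fintype n] [DecidableEq n] (ρ : Matrix n n ℂ) : Prop :=
  ρ.PosSemidef ∧ ρ.trace = 1

/-- Partial transpose on the second tensor factor. -/
noncomputable def ptB {dA dB : ℕ} (X : Matrix (Fin dA × Fin dB) (Fin dA × Fin dB) ℂ) :
    Matrix (Fin dA × Fin dB) (Fin dA × Fin dB) ℂ :=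
  Matrix.of fun p q => X (p.1, q.2) (q.1, p.2)

/-- Hermitian inner product ⟨x,y⟩ = ∑ conj(xᵢ) yᵢ. -/
noncomputable def hinner {ι : Type*} [Fintype ι] (x y : ι → ℂ) : ℂ := ∑ i, star (x i) * y i

/-- Entrywise complex conjugate of a vector. -/
noncomputable def cconj {ι : Type*} (x : ι → ℂ) : ι → ℂ := fun i => star (x i)
open Kronecker

noncomputable def pauliY : Matrix (Fin 2) (Fin 2) ℂ := !![0, -Complex.I; Complex.I, 0]

noncomputable def etaState : Matrix (Fin 2 × Fin 2) (Fin 2 × Fin 2) ℂ :=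
  (1/4 : ℂ) • ((1 : Matrix (Fin 2 × Fin 2) (Fin 2 × Fin 2) ℂ) + pauliY ⊗ₖ pauliY)

/-! Writing `σ` for `σ_y`, the state `η` is the equal mixture of the product states `P₊ ⊗ P₊` and
`P₋ ⊗ P₋`, where `P± = (1 ± σ)/2` are the eigenprojections of the involution `σ`. Since
`σᵀ = -σ`, the partial transpose flips the sign of the `σ ⊗ σ` part, so `η - η^{T_B}` is a nonzero
matrix and hence has positive trace norm. -/

section

variable {n : Type*} [Fintype n] [DecidableEq n]

theorem traceNorm_pos {A : Matrix n n ℂ}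
    (hA : A ≠ 0) : 0 < traceNorm A := by
  have hAA := isHermitian_conjTranspose_mul_self A
  have hsv : ∀ i ∈ Finset.univ, 0 ≤ singularValues A i := fun i _ => Real.sqrt_nonneg _
  refine (Finset.sum_nonneg hsv).lt_of_ne fun h => hA ?_
  rw [← conjTranspose_mul_self_eq_zero, ← hAA.eigenvalues_eq_zero_iff]
  funext i
  have hi := (Finset.sum_eq_zero_iff_of_nonneg hsv).mp h.symm i (Finset.mem_univ i)
  exact (Real.sqrt_eq_zero ((posSemidef_conjTranspose_mul_self A).eigenvalues_nonneg i)).mp hi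

/-- The projection onto the `+1` eigenspace when `σ` is a Hermitian involution. -/
noncomputable def plusProj (σ : Matrix n n ℂ) : Matrix n n ℂ :=
  (1/2 : ℂ) • (1 + σ)

theorem plusProj_mul_self {σ : Matrix n n ℂ} (hσ : σ * σ = 1) :
    plusProj σ * plusProj σ = plusProj σ := by
  simp only [plusProj, smul_mul_smul_comm, add_mul, mul_add, hσ, one_mul, mul_one]
  module

end

theorem isDensity_plusProj {σ : Matrix (Fin 2) (Fin 2) ℂ} (hσ : σ.IsHermitian)
    (hσσ : σ * σ = 1) (htr : σ.trace = 0) : IsDensity (plusProj σ) := by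
  have hP : (plusProj σ).IsHermitian := by
    simp only [plusProj, IsHermitian, conjTranspose_smul, conjTranspose_add, conjTranspose_one,
      hσ.eq]
    norm_num
  constructor
  · have := posSemidef_conjTranspose_mul_self (plusProj σ)
    rwa [hP.eq, plusProj_mul_self hσσ] at this
  · simp only [plusProj, trace_smul, trace_add, trace_one, htr]
    norm_num

theorem plusProj_kronecker_add_plusProj_neg_kronecker {m n : Type*} [Fintype m] [DecidableEq m]
    [Fintype n] [DecidableEq n] (σ : Matrix m m ℂ) (τ : Matrix n n ℂ) :
    (1/2 : ℂ) • (plusProj σ ⊗ₖ plusProj τ) + (1/2 : ℂ) • (plusProj (-σ) ⊗ₖ plusProj (-τ)) =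
      (1/4 : ℂ) • (1 + σ ⊗ₖ τ) := by
  simp only [plusProj, ← neg_one_smul ℂ σ, ← neg_one_smul ℂ τ, smul_kronecker, kronecker_smul,
    add_kronecker, kronecker_add, one_kronecker_one]
  module

theorem pauliY_isHermitian : pauliY.IsHermitian := by
  ext i j; fin_cases i <;> fin_cases j <;> simp [pauliY]

theorem pauliY_mul_self : pauliY * pauliY = 1 := by
  ext i j; fin_cases i <;> fin_cases j <;> simp [pauliY]

theorem trace_pauliY : pauliY.trace = 0 := by
  simp [pauliY, trace_fin_two]

theorem etaState_ne_ptB : etaState ≠ ptB etaState := by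
  intro h
  have := congrFun (congrFun h (0, 0)) (1, 1)
  norm_num [etaState, ptB, pauliY] at this

/-- η = (1/4)(I + σ_y ⊗ σ_y) is a separable density matrix yet
‖η − η^{T_B}‖₁ > 0. -/
theorem eta_separable_not_pt_invariant :
    (∃ (n : ℕ) (p : Fin n → ℝ) (ρ τ : Fin n → Matrix (Fin 2) (Fin 2) ℂ),
      (∀ k, 0 ≤ p k) ∧ (∑ k, p k = 1) ∧
      (∀ k, IsDensity (ρ k)) ∧ (∀ k, IsDensity (τ k)) ∧
      etaState = ∑ k, (p k : ℂ) • (ρ k ⊗ₖ τ k)) ∧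
    0 < traceNorm (etaState - ptB etaState) := by
  have hplus := isDensity_plusProj pauliY_isHermitian pauliY_mul_self trace_pauliY
  have hminus : IsDensity (plusProj (-pauliY)) :=
    isDensity_plusProj pauliY_isHermitian.neg (by rw [neg_mul_neg, pauliY_mul_self])
      (by rw [trace_neg, trace_pauliY, neg_zero])
  have hstates : ∀ k, IsDensity (![plusProj pauliY, plusProj (-pauliY)] k) :=
    Fin.forall_fin_two.mpr ⟨hplus, hminus⟩
  refine ⟨⟨2, fun _ => 1/2, _, _, fun _ => by norm_num, by norm_num, hstates, hstates, ?_⟩,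
    traceNorm_pos (sub_ne_zero.mpr etaState_ne_ptB)⟩
  rw [Fin.sum_univ_two, etaState, ← plusProj_kronecker_add_plusProj_neg_kronecker]
  push_cast
  rfl
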